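/- arXiv:1605.01068 — 3 statements merged into one kernel-verified Lean document; each statement's English description precedes it below -/
import Mathlib

section
/- Let d ≥ 2 divide n, and let f_d(n) be the number of permutations in S_n all of whose cycle lengths are divisible by d. Then f_d(n) ≤ n!·n^{-1+1/d}. -/
/-- `fd d n` is the number of permutations of `n` points all of whose cycle
lengths (including fixed points, which are cycles of length 1) are divisible
by `d`. -/
noncomputable def fd (d n : ℕ) : ℕ :=
  Nat.card {π : Equiv.Perm (Fin n) // ∀ x, d ∣ Function.minimalPeriod (⇑π) x}

/-!
Mark the point `0`, prescribe the residue mod `d` of the length of its cycle, and ask all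
other cycles to have length divisible by `d`. Deleting `0` from its cycle
(`Equiv.Perm.decomposeFin`) lowers that residue by one, and `0` may have sat before any of the
other points; a fixed point `0` is only possible for residue `1`. Going once around the
residues gives `f_d(n + d) / (n + d)! = (n + 1) / (n + d) · f_d(n) / n!`. As
`(n + 1)^(1/d) (n + d + 1)^(1 - 1/d) ≤ n + d` by weighted AM–GM, induction on `n / d` gives
`f_d(n) / n! ≤ (n + 1)^(-1 + 1/d)`.
-/

open Equiv Equiv.Perm Function
open scoped Nat

namespace Function

theorem minimalPeriod_eq_of_iterate_apply {α β : Type*} {f : α → α} {g : β → β} {e : α → β}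
    (he : Injective e) {x : α} (h : ∀ k, g^[k] (e x) = e (f^[k] x)) :
    minimalPeriod g (e x) = minimalPeriod f x :=
  minimalPeriod_eq_minimalPeriod_iff.2 fun k => by
    simp only [IsPeriodicPt, IsFixedPt, h, he.eq_iff]

end Function

namespace Equiv.Perm

section

variable {α : Type*}

theorem minimalPeriod_pos [Finite α] (σ : Perm α) (x : α) : 0 < minimalPeriod σ x :=
  minimalPeriod_pos_of_mem_periodicPts
    ⟨orderOf σ, orderOf_pos σ, by
      rw [IsPeriodicPt, IsFixedPt, iterate_eq_pow, pow_orderOf_eq_one]; rfl⟩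

theorem SameCycle.minimalPeriod_eq [Finite α] {σ : Perm α} {x y : α} (h : σ.SameCycle x y) :
    minimalPeriod σ x = minimalPeriod σ y := by
  obtain ⟨i, rfl⟩ := h.exists_nat_pow_eq
  rw [← iterate_eq_pow, minimalPeriod_apply_iterate]
  exact minimalPeriod_pos_iff_mem_periodicPts.1 (minimalPeriod_pos σ x)

theorem minimalPeriod_conj (g σ : Perm α) (x : α) :
    minimalPeriod (g * σ * g⁻¹) (g x) = minimalPeriod σ x :=
  minimalPeriod_eq_of_iterate_apply g.injective fun k => by
    rw [iterate_eq_pow, iterate_eq_pow, _root_.conj_pow]; simp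

end

section

variable {n : ℕ} (σ : Perm (Fin n))

-- `decomposeFin.symm (q.succ, σ)` is `σ` with the new point `0` inserted into the cycle of `q`,
-- just before `q`; `decomposeFin.symm (0, σ)` adds `0` as a fixed point.

theorem decomposeFin_symm_apply_succ_eq_zero_or (p : Fin (n + 1)) (x : Fin n) :
    decomposeFin.symm (p, σ) x.succ = 0 ∨ decomposeFin.symm (p, σ) x.succ = (σ x).succ := by
  rw [decomposeFin_symm_apply_succ, swap_apply_def]
  split_ifs with h0
  · exact absurd h0 (Fin.succ_ne_zero _)
  · exact Or.inl rfl
  · exact Or.inr rfl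

theorem decomposeFin_symm_succ_apply_succ_of_ne {q x : Fin n} (hx : σ x ≠ q) :
    decomposeFin.symm (q.succ, σ) x.succ = (σ x).succ := by
  rw [decomposeFin_symm_apply_succ]
  exact swap_apply_of_ne_of_ne (Fin.succ_ne_zero _) (Fin.succ_injective _ |>.ne hx)

theorem iterate_decomposeFin_symm_apply_succ {p : Fin (n + 1)} {x : Fin n}
    (hx : ¬ (decomposeFin.symm (p, σ)).SameCycle 0 x.succ) (k : ℕ) :
    (decomposeFin.symm (p, σ))^[k] x.succ = (σ^[k] x).succ := by
  induction k with
  | zero => rfl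
  | succ k ih =>
    rw [iterate_succ_apply', ih, iterate_succ_apply']
    refine (decomposeFin_symm_apply_succ_eq_zero_or σ p _).resolve_left fun h0 => hx ?_
    refine (SameCycle.symm ⟨((k + 1 : ℕ) : ℤ), ?_⟩)
    rw [zpow_natCast, ← iterate_eq_pow, iterate_succ_apply', ih, h0]

theorem minimalPeriod_decomposeFin_symm_succ {p : Fin (n + 1)} {x : Fin n}
    (hx : ¬ (decomposeFin.symm (p, σ)).SameCycle 0 x.succ) :
    minimalPeriod (decomposeFin.symm (p, σ)) x.succ = minimalPeriod σ x :=
  minimalPeriod_eq_of_iterate_apply (Fin.succ_injective _)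
    (iterate_decomposeFin_symm_apply_succ σ hx)

theorem minimalPeriod_decomposeFin_symm_zero_zero :
    minimalPeriod (decomposeFin.symm (0, σ)) 0 = 1 :=
  minimalPeriod_eq_one_iff_isFixedPt.2 (decomposeFin_symm_apply_zero 0 σ)

theorem not_sameCycle_decomposeFin_symm_zero (x : Fin n) :
    ¬ (decomposeFin.symm (0, σ)).SameCycle 0 x.succ := fun h =>
  Fin.succ_ne_zero x (h.eq_of_left (decomposeFin_symm_apply_zero 0 σ)).symm

variable (q : Fin n)

theorem iterate_decomposeFin_symm_succ_zero {k : ℕ} (hk : k < minimalPeriod σ q) :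
    (decomposeFin.symm (q.succ, σ))^[k + 1] 0 = (σ^[k] q).succ := by
  induction k with
  | zero => exact decomposeFin_symm_apply_zero _ σ
  | succ k ih =>
    have hne : σ (σ^[k] q) ≠ q := by
      rw [← iterate_succ_apply' σ]
      exact not_isPeriodicPt_of_pos_of_lt_minimalPeriod k.succ_ne_zero hk
    rw [iterate_succ_apply', ih (by omega), decomposeFin_symm_succ_apply_succ_of_ne σ hne,
      iterate_succ_apply']

theorem minimalPeriod_decomposeFin_symm_succ_zero :
    minimalPeriod (decomposeFin.symm (q.succ, σ)) 0 = minimalPeriod σ q + 1 := by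
  set π := decomposeFin.symm (q.succ, σ)
  obtain ⟨m, hm⟩ : ∃ m, minimalPeriod σ q = m + 1 :=
    ⟨_, (Nat.succ_pred_eq_of_pos (minimalPeriod_pos σ q)).symm⟩
  refine le_antisymm (IsPeriodicPt.minimalPeriod_le (by omega) ?_) ?_
  · have hq : σ (σ^[m] q) = q := by
      rw [← iterate_succ_apply' σ, Nat.succ_eq_add_one, ← hm, iterate_minimalPeriod]
    rw [hm, IsPeriodicPt, IsFixedPt, iterate_succ_apply',
      iterate_decomposeFin_symm_succ_zero σ q (by omega), decomposeFin_symm_apply_succ, hq,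
      swap_apply_right]
  · by_contra! hlt
    obtain ⟨k, hk⟩ : ∃ k, minimalPeriod π 0 = k + 1 :=
      ⟨_, (Nat.succ_pred_eq_of_pos (minimalPeriod_pos π 0)).symm⟩
    have h0 := iterate_minimalPeriod (f := π) (x := 0)
    rw [hk, iterate_decomposeFin_symm_succ_zero σ q (by omega)] at h0
    exact Fin.succ_ne_zero _ h0

theorem sameCycle_decomposeFin_symm_succ_zero_succ_iff (x : Fin n) :
    (decomposeFin.symm (q.succ, σ)).SameCycle 0 x.succ ↔ σ.SameCycle q x := by
  constructor
  · intro h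
    obtain ⟨i, hi⟩ := h.exists_nat_pow_eq
    rw [← iterate_eq_pow, ← iterate_mod_minimalPeriod_eq,
      minimalPeriod_decomposeFin_symm_succ_zero] at hi
    have hlt := Nat.mod_lt i (minimalPeriod σ q).succ_pos
    generalize i % (minimalPeriod σ q + 1) = k at hi hlt
    cases k with
    | zero => exact absurd hi.symm (Fin.succ_ne_zero x)
    | succ k =>
      rw [iterate_decomposeFin_symm_succ_zero σ q (by omega)] at hi
      exact ⟨k, by rw [zpow_natCast, ← iterate_eq_pow, Fin.succ_injective _ hi]⟩
  · intro h
    obtain ⟨i, rfl⟩ := h.exists_nat_pow_eq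
    refine ⟨(i % minimalPeriod σ q + 1 : ℕ), ?_⟩
    rw [zpow_natCast, ← iterate_eq_pow,
      iterate_decomposeFin_symm_succ_zero σ q (Nat.mod_lt _ (minimalPeriod_pos σ q)),
      iterate_mod_minimalPeriod_eq, iterate_eq_pow]

theorem card_subtype_eq_sum_decomposeFin (P : Perm (Fin (n + 1)) → Prop) :
    Nat.card {π // P π} = ∑ p, Nat.card {σ : Perm (Fin n) // P (decomposeFin.symm (p, σ))} := by
  rw [← Nat.card_sigma]
  exact Nat.card_congr <| (decomposeFin.subtypeEquiv fun π => by
    rw [symm_apply_apply]).trans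
      (subtypeProdEquivSigmaSubtype fun p σ => P (decomposeFin.symm (p, σ)))

end

end Equiv.Perm

section Marked

variable {α : Type*}

def CyclesDvdExcept (d : ℕ) (j : ZMod d) (σ : Perm α) (a : α) : Prop :=
  (minimalPeriod σ a : ZMod d) = j ∧ ∀ x, ¬ σ.SameCycle a x → d ∣ minimalPeriod σ x

variable {d : ℕ} {j : ZMod d}

theorem cyclesDvdExcept_zero_iff [Finite α] {σ : Perm α} {a : α} :
    CyclesDvdExcept d 0 σ a ↔ ∀ x, d ∣ minimalPeriod σ x := by
  refine ⟨fun ⟨ha, hx⟩ x => ?_, fun h => ⟨(ZMod.natCast_eq_zero_iff _ _).2 (h a), fun x _ => h x⟩⟩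
  by_cases hax : σ.SameCycle a x
  · exact hax.minimalPeriod_eq ▸ (ZMod.natCast_eq_zero_iff _ _).1 ha
  · exact hx x hax

theorem cyclesDvdExcept_conj_iff (g σ : Perm α) (a : α) :
    CyclesDvdExcept d j (g * σ * g⁻¹) (g a) ↔ CyclesDvdExcept d j σ a := by
  have hconj (x : α) : minimalPeriod (g * σ * g⁻¹) x = minimalPeriod σ (g.symm x) := by
    simpa using minimalPeriod_conj g σ (g.symm x)
  simp only [CyclesDvdExcept, hconj, sameCycle_conj, coe_inv, symm_apply_apply]
  exact and_congr_right fun _ =>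
    (g.forall_congr_left (p := fun x => ¬σ.SameCycle a x → d ∣ minimalPeriod σ x)).symm

theorem card_cyclesDvdExcept_eq [DecidableEq α] (a b : α) :
    Nat.card {σ : Perm α // CyclesDvdExcept d j σ a} =
      Nat.card {σ : Perm α // CyclesDvdExcept d j σ b} := by
  refine Nat.card_congr ((MulAut.conj (swap a b)).toEquiv.subtypeEquiv fun σ => ?_)
  have h := cyclesDvdExcept_conj_iff (d := d) (j := j) (swap a b) σ a
  rw [swap_apply_left] at h
  exact h.symm

variable {n : ℕ} (σ : Perm (Fin n))

theorem cyclesDvdExcept_decomposeFin_symm_zero_iff :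
    CyclesDvdExcept d j (decomposeFin.symm (0, σ)) 0 ↔ j = 1 ∧ ∀ x, d ∣ minimalPeriod σ x := by
  simp only [CyclesDvdExcept, minimalPeriod_decomposeFin_symm_zero_zero, Nat.cast_one,
    Fin.forall_fin_succ, SameCycle.refl, not_true_eq_false, false_imp_iff, true_and,
    not_sameCycle_decomposeFin_symm_zero, not_false_eq_true, true_imp_iff,
    minimalPeriod_decomposeFin_symm_succ σ (not_sameCycle_decomposeFin_symm_zero σ _), eq_comm]

theorem cyclesDvdExcept_decomposeFin_symm_succ_iff (q : Fin n) :
    CyclesDvdExcept d j (decomposeFin.symm (q.succ, σ)) 0 ↔ CyclesDvdExcept d (j - 1) σ q := by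
  have hout {x : Fin n} (hx : ¬ σ.SameCycle q x) :=
    minimalPeriod_decomposeFin_symm_succ σ
      (mt (sameCycle_decomposeFin_symm_succ_zero_succ_iff σ q x).1 hx)
  simp only [CyclesDvdExcept, minimalPeriod_decomposeFin_symm_succ_zero, Nat.cast_succ,
    eq_sub_iff_add_eq, Fin.forall_fin_succ, SameCycle.refl, not_true_eq_false, false_imp_iff,
    true_and, sameCycle_decomposeFin_symm_succ_zero_succ_iff]
  refine and_congr_right fun _ => forall_congr' fun x => imp_congr_right fun hx => ?_
  rw [hout hx]

end Marked

noncomputable def fdMarked (d : ℕ) (j : ZMod d) (n : ℕ) : ℕ :=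
  Nat.card {σ : Perm (Fin (n + 1)) // CyclesDvdExcept d j σ 0}

theorem fd_succ (d n : ℕ) : fd d (n + 1) = fdMarked d 0 n :=
  Nat.card_congr (subtypeEquivRight fun _ => cyclesDvdExcept_zero_iff.symm)

theorem fdMarked_one (d n : ℕ) : fdMarked d 1 n = (n + 1) * fd d n := by
  have hp (p : Fin (n + 1)) (σ : Perm (Fin n)) :
      CyclesDvdExcept d 1 (decomposeFin.symm (p, σ)) 0 ↔ ∀ x, d ∣ minimalPeriod σ x := by
    cases p using Fin.cases with
    | zero => simp [cyclesDvdExcept_decomposeFin_symm_zero_iff]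
    | succ q => rw [cyclesDvdExcept_decomposeFin_symm_succ_iff, sub_self, cyclesDvdExcept_zero_iff]
  simp only [fdMarked, card_subtype_eq_sum_decomposeFin, hp, Finset.sum_const, Finset.card_univ,
    Fintype.card_fin, smul_eq_mul, fd]

theorem fdMarked_succ {d : ℕ} {j : ZMod d} (hj : j ≠ 1) (n : ℕ) :
    fdMarked d j (n + 1) = (n + 1) * fdMarked d (j - 1) n := by
  simp only [fdMarked, card_subtype_eq_sum_decomposeFin (n := n + 1), Fin.sum_univ_succ,
    cyclesDvdExcept_decomposeFin_symm_zero_iff, hj, false_and,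
    cyclesDvdExcept_decomposeFin_symm_succ_iff,
    card_cyclesDvdExcept_eq _ (0 : Fin (n + 1)), Nat.card_of_isEmpty, Finset.sum_const,
    Finset.card_univ, Fintype.card_fin, smul_eq_mul]
  ring

theorem fdMarked_mul_factorial {d t : ℕ} (ht : t < d) (n : ℕ) :
    fdMarked d ((t : ZMod d) + 1) (n + t) * n ! = (n + t)! * ((n + 1) * fd d n) := by
  induction t with
  | zero => simp [fdMarked_one, mul_comm]
  | succ t ih =>
    have hj : ((t + 1 : ℕ) : ZMod d) + 1 ≠ 1 := by
      rw [Ne, add_eq_right, ZMod.natCast_eq_zero_iff]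
      exact Nat.not_dvd_of_pos_of_lt t.succ_pos ht
    rw [← add_assoc, fdMarked_succ hj, add_sub_cancel_right, Nat.cast_succ, mul_assoc,
      ih (by omega), Nat.factorial_succ]
    ring

theorem fd_add_mul_factorial {d : ℕ} (hd : 0 < d) (n : ℕ) :
    fd d (n + d) * n ! * (n + d) = (n + d)! * ((n + 1) * fd d n) := by
  obtain ⟨e, rfl⟩ : ∃ e, d = e + 1 := ⟨d - 1, by omega⟩
  have h0 : (0 : ZMod (e + 1)) = (e : ZMod (e + 1)) + 1 := by
    rw [← Nat.cast_succ, ZMod.natCast_self]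
  rw [← add_assoc, fd_succ, h0, fdMarked_mul_factorial (lt_add_one e), Nat.factorial_succ]
  ring

theorem Real.rpow_mul_rpow_le_add {x d : ℝ} (hx : -1 ≤ x) (hd : 1 ≤ d) :
    (x + 1) ^ (1 / d) * (x + d + 1) ^ (1 - 1 / d) ≤ x + d := by
  have hd₀ : 0 < d := by linarith
  have hw : 1 / d ≤ 1 := (div_le_one hd₀).2 hd
  calc (x + 1) ^ (1 / d) * (x + d + 1) ^ (1 - 1 / d)
      ≤ 1 / d * (x + 1) + (1 - 1 / d) * (x + d + 1) :=
        geom_mean_le_arith_mean2_weighted (by positivity) (by linarith) (by linarith)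
          (by linarith) (by ring)
    _ = x + d := by field_simp; ring

theorem le_rpow_of_recurrence {d : ℕ} (hd : 0 < d) {r : ℕ → ℝ} (h0 : r 0 ≤ 1)
    (hr : ∀ n, r (n + d) = (n + 1) / (n + d) * r n) (m : ℕ) :
    r (m * d) ≤ ((m * d : ℕ) + 1 : ℝ) ^ (-1 + 1 / (d : ℝ)) := by
  induction m with
  | zero => simpa using h0
  | succ m ih =>
    set x : ℝ := ((m * d : ℕ) : ℝ)
    have hd₁ : (1 : ℝ) ≤ d := by exact_mod_cast hd
    have hx : 0 ≤ x := Nat.cast_nonneg _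
    have hxd : 0 < x + d := by linarith
    rw [Nat.succ_mul, hr, Nat.cast_add]
    calc (x + 1) / (x + d) * r (m * d)
        ≤ (x + 1) / (x + d) * (x + 1) ^ (-1 + 1 / (d : ℝ)) := by gcongr
      _ = (x + 1) ^ (1 / (d : ℝ)) / (x + d) := by
        rw [div_mul_eq_mul_div, ← Real.rpow_one_add' (by linarith) (by simp [hd.ne'])]
        ring_nf
      _ ≤ (x + d + 1) ^ (-1 + 1 / (d : ℝ)) := by
        rw [div_le_iff₀ hxd, show -1 + 1 / (d : ℝ) = -(1 - 1 / d) by ring,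
          Real.rpow_neg (by linarith), ← div_eq_inv_mul, le_div_iff₀ (by positivity)]
        exact Real.rpow_mul_rpow_le_add (by linarith) hd₁

theorem fd_div_factorial_le {d n : ℕ} (hd : 0 < d) (hdn : d ∣ n) :
    (fd d n : ℝ) / n ! ≤ ((n : ℝ) + 1) ^ (-1 + 1 / (d : ℝ)) := by
  obtain ⟨m, rfl⟩ := hdn
  rw [mul_comm d m]
  refine le_rpow_of_recurrence hd (r := fun n => (fd d n : ℝ) / n !) ?_ (fun n => ?_) m
  · have h : fd d 0 ≤ 1 := (Finite.card_subtype_le _).trans (by simp)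
    simpa using (Nat.cast_le (α := ℝ)).2 h
  · have h : (fd d (n + d) : ℝ) * n ! * (n + d) = (n + d)! * ((n + 1) * fd d n) := by
      exact_mod_cast fd_add_mul_factorial hd n
    field_simp
    linear_combination h

theorem stmt_1_general (d n : ℕ) (hdn : d ∣ n) (hn : 0 < n) :
    (fd d n : ℝ) ≤ (n.factorial : ℝ) * (n : ℝ) ^ (-1 + 1 / (d : ℝ) : ℝ) := by
  have hd : 0 < d := Nat.pos_of_dvd_of_pos hdn hn
  have hexp : -1 + 1 / (d : ℝ) ≤ 0 := by
    rw [neg_add_nonpos_iff, div_le_one (by positivity)]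
    exact_mod_cast hd
  have hbound := fd_div_factorial_le hd hdn
  rw [div_le_iff₀ (by positivity)] at hbound
  calc (fd d n : ℝ) ≤ ((n : ℝ) + 1) ^ (-1 + 1 / (d : ℝ)) * n.factorial := hbound
    _ ≤ (n : ℝ) ^ (-1 + 1 / (d : ℝ)) * n.factorial := by
      gcongr ?_ * _
      exact Real.rpow_le_rpow_of_nonpos (by exact_mod_cast hn) (by linarith) hexp
    _ = _ := mul_comm _ _

theorem stmt_1 (d n : ℕ) (hd : 2 ≤ d) (hdn : d ∣ n) (hn : 0 < n) :
    (fd d n : ℝ) ≤ (n.factorial : ℝ) * (n : ℝ) ^ (-1 + 1 / (d : ℝ) : ℝ) :=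
  stmt_1_general d n hdn hn
end

section
/- There is a constant c > 0 such that for every d ≥ 2 dividing n, f_d(n) ≥ c·n!·n^{-1+1/d}, where f_d(n) is the number of permutations in S_n all of whose cycle lengths are divisible by d. -/
open Function Equiv Finset

namespace Equiv.Perm

variable {α : Type*}

theorem pow_apply_eq_self_iff_minimalPeriod_dvd (σ : Perm α) (x : α) (n : ℕ) :
    (σ ^ n) x = x ↔ minimalPeriod σ x ∣ n :=
  MulAction.pow_smul_eq_iff_minimalPeriod_dvd (a := σ) (b := x)

theorem minimalPeriod_eq_of_pow_apply_eq_self_iff {σ : Perm α} {x : α} {k : ℕ}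
    (h : ∀ n : ℕ, (σ ^ n) x = x ↔ k ∣ n) : minimalPeriod σ x = k :=
  Nat.dvd_right_iff_eq.mp fun n =>
    (pow_apply_eq_self_iff_minimalPeriod_dvd σ x n).symm.trans (h n)

theorem pow_mul_apply_of_commute_of_apply_eq_self {σ τ : Perm α} (hστ : Commute σ τ) {x : α}
    (hx : σ x = x) (n : ℕ) : ((σ * τ) ^ n) x = (τ ^ n) x := by
  rw [hστ.mul_pow, (hστ.pow_pow n n).eq, mul_apply, pow_apply_eq_self_of_apply_eq_self hx]

theorem minimalPeriod_mul_of_commute_of_apply_eq_self {σ τ : Perm α} (hστ : Commute σ τ)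
    {x : α} (hx : σ x = x) : minimalPeriod (σ * τ) x = minimalPeriod τ x :=
  minimalPeriod_eq_of_pow_apply_eq_self_iff fun n => by
    rw [pow_mul_apply_of_commute_of_apply_eq_self hστ hx, pow_apply_eq_self_iff_minimalPeriod_dvd]

theorem minimalPeriod_extendDomain_apply_image {β : Type*} {p : β → Prop} [DecidablePred p]
    (σ : Perm α) (e : α ≃ Subtype p) (b : α) :
    minimalPeriod (σ.extendDomain e) (e b) = minimalPeriod σ b :=
  minimalPeriod_eq_of_pow_apply_eq_self_iff fun n => by
    rw [← extendDomain_pow, extendDomain_apply_image, Subtype.coe_inj, e.apply_eq_iff_eq,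
      pow_apply_eq_self_iff_minimalPeriod_dvd]

end Equiv.Perm

theorem List.Nodup.minimalPeriod_formPerm {α : Type*} [DecidableEq α] {l : List α}
    (hl : l.Nodup) {x : α} (hx : x ∈ l) : minimalPeriod l.formPerm x = l.length := by
  obtain ⟨i, hi, rfl⟩ := List.getElem_of_mem hx
  refine Equiv.Perm.minimalPeriod_eq_of_pow_apply_eq_self_iff fun n => ?_
  rw [formPerm_pow_apply_getElem l hl n i hi, hl.getElem_inj_iff,
    ← Nat.add_modEq_left_iff (a := i), Nat.ModEq, Nat.mod_eq_of_lt hi]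

section InsertCycle

variable {N L : ℕ} (a : Fin L ↪ Fin N)

def cycleThroughLast : List (Fin (N + 1)) :=
  Fin.last N :: List.ofFn (Fin.castSucc ∘ a)

@[simp]
theorem length_cycleThroughLast : (cycleThroughLast a).length = L + 1 := by
  simp [cycleThroughLast]

theorem nodup_cycleThroughLast : (cycleThroughLast a).Nodup := by
  refine List.nodup_cons.2 ⟨by simp [List.mem_ofFn, Fin.castSucc_ne_last], ?_⟩
  exact List.nodup_ofFn.2 ((Fin.castSucc_injective N).comp a.injective)

theorem last_mem_cycleThroughLast : Fin.last N ∈ cycleThroughLast a :=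
  List.mem_cons_self

theorem card_notMem_cycleThroughLast :
    Fintype.card {x // x ∉ cycleThroughLast a} = N - L := by
  rw [Fintype.card_subtype_compl, Fintype.card_fin,
    Fintype.card_of_subtype _ fun x => List.mem_toFinset,
    List.toFinset_card_of_nodup (nodup_cycleThroughLast a), length_cycleThroughLast]
  omega

noncomputable def cycleComplEquiv : Fin (N - L) ≃ {x // x ∉ cycleThroughLast a} :=
  (Fintype.equivFinOfCardEq (card_notMem_cycleThroughLast a)).symm

noncomputable def insertCycle (σ : Perm (Fin (N - L))) : Perm (Fin (N + 1)) :=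
  σ.extendDomain (cycleComplEquiv a) * (cycleThroughLast a).formPerm

variable (σ : Perm (Fin (N - L)))

theorem extendDomain_cycleComplEquiv_apply_of_mem {x : Fin (N + 1)}
    (hx : x ∈ cycleThroughLast a) : σ.extendDomain (cycleComplEquiv a) x = x :=
  Perm.extendDomain_apply_not_subtype _ _ (not_not_intro hx)

theorem commute_extendDomain_formPerm :
    Commute (σ.extendDomain (cycleComplEquiv a)) (cycleThroughLast a).formPerm := by
  refine Perm.Disjoint.commute fun x => ?_
  by_cases hx : x ∈ cycleThroughLast a
  · exact .inl (extendDomain_cycleComplEquiv_apply_of_mem a σ hx)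
  · exact .inr (List.formPerm_apply_of_notMem hx)

theorem minimalPeriod_insertCycle_of_mem {x : Fin (N + 1)} (hx : x ∈ cycleThroughLast a) :
    minimalPeriod (insertCycle a σ) x = L + 1 := by
  rw [insertCycle, Perm.minimalPeriod_mul_of_commute_of_apply_eq_self
    (commute_extendDomain_formPerm a σ) (extendDomain_cycleComplEquiv_apply_of_mem a σ hx),
    (nodup_cycleThroughLast a).minimalPeriod_formPerm hx, length_cycleThroughLast]

theorem minimalPeriod_insertCycle_cycleComplEquiv (b : Fin (N - L)) :
    minimalPeriod (insertCycle a σ) (cycleComplEquiv a b) = minimalPeriod σ b := by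
  rw [insertCycle, (commute_extendDomain_formPerm a σ).eq,
    Perm.minimalPeriod_mul_of_commute_of_apply_eq_self (commute_extendDomain_formPerm a σ).symm
      (List.formPerm_apply_of_notMem (cycleComplEquiv a b).2),
    Perm.minimalPeriod_extendDomain_apply_image]

theorem insertCycle_pow_succ_last (i : Fin L) :
    (insertCycle a σ ^ (i.1 + 1)) (Fin.last N) = Fin.castSucc (a i) := by
  have h0 : 0 < (cycleThroughLast a).length := by simp
  rw [insertCycle, Perm.pow_mul_apply_of_commute_of_apply_eq_self
    (commute_extendDomain_formPerm a σ)
    (extendDomain_cycleComplEquiv_apply_of_mem a σ (last_mem_cycleThroughLast a))]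
  have h := List.formPerm_pow_apply_getElem _ (nodup_cycleThroughLast a) (i.1 + 1) 0 h0
  have hi : i.1 + 1 < (cycleThroughLast a).length := by simp
  simp only [Nat.zero_add, Nat.mod_eq_of_lt hi] at h
  simpa [cycleThroughLast] using h

theorem insertCycle_cycleComplEquiv (b : Fin (N - L)) :
    insertCycle a σ (cycleComplEquiv a b) = cycleComplEquiv a (σ b) := by
  rw [insertCycle, Perm.mul_apply, List.formPerm_apply_of_notMem (cycleComplEquiv a b).2,
    Perm.extendDomain_apply_image]

theorem dvd_minimalPeriod_insertCycle {d : ℕ} (hL : d ∣ L + 1)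
    (hσ : ∀ b, d ∣ minimalPeriod σ b) (x : Fin (N + 1)) :
    d ∣ minimalPeriod (insertCycle a σ) x := by
  by_cases hx : x ∈ cycleThroughLast a
  · rwa [minimalPeriod_insertCycle_of_mem a σ hx]
  · obtain ⟨b, hb⟩ := (cycleComplEquiv a).surjective ⟨x, hx⟩
    rw [show x = cycleComplEquiv a b from congrArg Subtype.val hb.symm,
      minimalPeriod_insertCycle_cycleComplEquiv]
    exact hσ b

variable {a σ}

theorem eq_of_insertCycle_eq {L' : ℕ} {a' : Fin L' ↪ Fin N} {σ' : Perm (Fin (N - L'))}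
    (h : insertCycle a σ = insertCycle a' σ') : L = L' := by
  have h' := minimalPeriod_insertCycle_of_mem a' σ' (last_mem_cycleThroughLast a')
  rw [← h, minimalPeriod_insertCycle_of_mem a σ (last_mem_cycleThroughLast a)] at h'
  omega

theorem insertCycle_inj {a' : Fin L ↪ Fin N} {σ' : Perm (Fin (N - L))} :
    insertCycle a σ = insertCycle a' σ' ↔ a = a' ∧ σ = σ' := by
  refine ⟨fun h => ?_, fun ⟨ha, hσ⟩ => ha ▸ hσ ▸ rfl⟩
  obtain rfl : a = a' := DFunLike.ext _ _ fun i => Fin.castSucc_injective N <| by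
    rw [← insertCycle_pow_succ_last a σ, ← insertCycle_pow_succ_last a' σ', h]
  refine ⟨rfl, Equiv.ext fun b => (cycleComplEquiv a).injective <| Subtype.ext ?_⟩
  rw [← insertCycle_cycleComplEquiv, ← insertCycle_cycleComplEquiv, h]

end InsertCycle

theorem sum_descFactorial_mul_fd_le (d N : ℕ) (s : Finset ℕ) (hs : ∀ L ∈ s, d ∣ L + 1) :
    ∑ L ∈ s, N.descFactorial L * fd d (N - L) ≤ fd d (N + 1) := by
  let Good (n : ℕ) := {π : Perm (Fin n) // ∀ x, d ∣ minimalPeriod π x}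
  let Ψ (t : Σ L : s, (Fin L ↪ Fin N) × Good (N - L)) : Good (N + 1) :=
    ⟨insertCycle t.2.1 t.2.2.1, dvd_minimalPeriod_insertCycle _ _ (hs _ t.1.2) t.2.2.2⟩
  have hΨ : Injective Ψ := by
    rintro ⟨⟨L, hL⟩, a, σ, hσ⟩ ⟨⟨L', hL'⟩, a', σ', hσ'⟩ h
    have h : insertCycle a σ = insertCycle a' σ' := congrArg Subtype.val h
    obtain rfl : L = L' := eq_of_insertCycle_eq h
    obtain ⟨rfl, rfl⟩ := insertCycle_inj.1 h
    rfl
  calc ∑ L ∈ s, N.descFactorial L * fd d (N - L)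
      = Nat.card (Σ L : s, (Fin L ↪ Fin N) × Good (N - L)) := by
        rw [← sum_attach]
        simp [fd, Good]
    _ ≤ fd d (N + 1) := Nat.card_le_card_of_injective Ψ hΨ

theorem mul_le_of_mul_succ_eq_succ {d m N j : ℕ} (hd : 0 < d) (hN : d * (m + 1) = N + 1)
    (hj : j ≤ m) : d * j ≤ N := by
  have := Nat.mul_le_mul_left d hj
  rw [Nat.mul_succ] at hN
  omega

theorem sum_descFactorial_mul_fd_mul_le {d m N : ℕ} (hd : 0 < d) (hN : d * (m + 1) = N + 1) :
    ∑ j ∈ range (m + 1), N.descFactorial (N - d * j) * fd d (d * j) ≤ fd d (N + 1) := by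
  have hle : ∀ j ∈ range (m + 1), d * j ≤ N := fun j hj =>
    mul_le_of_mul_succ_eq_succ hd hN (mem_range_succ_iff.1 hj)
  have h := sum_descFactorial_mul_fd_le d N ((range (m + 1)).image (N - d * ·)) <| by
    simp only [mem_image, forall_exists_index, and_imp, forall_apply_eq_imp_iff₂]
    intro j hj
    rw [show N - d * j + 1 = d * (m + 1 - j) by rw [Nat.mul_sub, hN]; have := hle j hj; omega]
    exact dvd_mul_right _ _
  rwa [sum_image fun i hi j hj hij => Nat.eq_of_mul_eq_mul_left hd <| by
      have := hle i hi; have := hle j hj; omega,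
    sum_congr rfl fun j hj => by rw [Nat.sub_sub_self (hle j hj)]] at h

theorem fd_zero (d : ℕ) : fd d 0 = 1 := by
  simp [fd]

noncomputable def pochhammerRatio (a : ℝ) (m : ℕ) : ℝ :=
  ∏ k ∈ range m, (k + a) / (k + 1)

theorem pochhammerRatio_succ (a : ℝ) (m : ℕ) :
    pochhammerRatio a (m + 1) = pochhammerRatio a m * ((m + a) / (m + 1)) :=
  prod_range_succ _ _

theorem pochhammerRatio_nonneg {a : ℝ} (ha : 0 ≤ a) (m : ℕ) : 0 ≤ pochhammerRatio a m :=
  prod_nonneg fun _ _ => by positivity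

theorem mul_sum_pochhammerRatio (a : ℝ) (m : ℕ) :
    a * ∑ j ∈ range m, pochhammerRatio a j = m * pochhammerRatio a m := by
  induction m with
  | zero => simp
  | succ m ih =>
    rw [sum_range_succ, mul_add, ih, pochhammerRatio_succ]
    push_cast
    field_simp

theorem mul_rpow_le_pochhammerRatio {a : ℝ} (ha0 : 0 ≤ a) (ha1 : a ≤ 1) {m : ℕ}
    (hm : 1 ≤ m) :
    a * (m : ℝ) ^ (a - 1) ≤ pochhammerRatio a m := by
  induction m, hm using Nat.le_induction with
  | base => simp [pochhammerRatio]
  | succ m hm ih =>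
    have hm0 : (0 : ℝ) < m := by exact_mod_cast hm
    have bernoulli : ((m : ℝ) / (m + 1)) ^ (1 - a) ≤ (m + a) / (m + 1) := by
      have h := rpow_one_add_le_one_add_mul_self (s := -1 / (m + 1)) (by
        rw [neg_div, neg_le_neg_iff, div_le_one (by positivity)]; linarith) (p := 1 - a)
        (by linarith) (by linarith)
      convert h using 2 <;> field_simp <;> ring
    have hsplit : ((m + 1 : ℕ) : ℝ) ^ (a - 1) =
        (m : ℝ) ^ (a - 1) * ((m : ℝ) / (m + 1)) ^ (1 - a) := by
      rw [Real.div_rpow hm0.le (by positivity), mul_div_assoc', ← Real.rpow_add hm0,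
        sub_add_sub_cancel', sub_self, Real.rpow_zero, one_div, ← Real.rpow_neg (by positivity),
        neg_sub, Nat.cast_succ]
    calc a * ((m + 1 : ℕ) : ℝ) ^ (a - 1)
        = a * (m : ℝ) ^ (a - 1) * ((m : ℝ) / (m + 1)) ^ (1 - a) := by rw [hsplit]; ring
      _ ≤ pochhammerRatio a m * ((m + a) / (m + 1)) := by
        gcongr
        exact pochhammerRatio_nonneg ha0 m
      _ = pochhammerRatio a (m + 1) := (pochhammerRatio_succ a m).symm

theorem natCast_rpow_inv_le_two (d : ℕ) : (d : ℝ) ^ (d : ℝ)⁻¹ ≤ 2 := by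
  rcases d.eq_zero_or_pos with rfl | hd
  · norm_num
  rw [Real.rpow_inv_le_iff_of_pos (by positivity) (by norm_num) (by positivity),
    Real.rpow_natCast]
  exact_mod_cast Nat.lt_two_pow_self.le

theorem factorial_mul_pochhammerRatio_le_fd {d : ℕ} (hd : 0 < d) (m : ℕ) :
    ((d * m).factorial : ℝ) * pochhammerRatio (d : ℝ)⁻¹ m ≤ fd d (d * m) := by
  refine Nat.strong_induction_on m fun m ih => ?_
  rcases m with _ | m
  · simp [pochhammerRatio, fd_zero]
  obtain ⟨N, hN⟩ : ∃ N, d * (m + 1) = N + 1 :=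
    Nat.exists_eq_add_one.2 (Nat.mul_pos hd m.succ_pos)
  have hNR : (N + 1 : ℝ) = d * (m + 1) := by exact_mod_cast hN.symm
  rw [hN]
  calc ((N + 1).factorial : ℝ) * pochhammerRatio (d : ℝ)⁻¹ (m + 1)
      = N.factorial * ∑ j ∈ range (m + 1), pochhammerRatio (d : ℝ)⁻¹ j := by
        have hsum : ∑ j ∈ range (m + 1), pochhammerRatio (d : ℝ)⁻¹ j
            = d * ((m + 1 : ℕ) * pochhammerRatio (d : ℝ)⁻¹ (m + 1)) := by
          rw [← mul_sum_pochhammerRatio, mul_inv_cancel_left₀ (by exact_mod_cast hd.ne')]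
        rw [hsum, Nat.factorial_succ]
        push_cast
        rw [hNR]
        ring
    _ = ∑ j ∈ range (m + 1), (N.descFactorial (N - d * j) : ℝ) *
          ((d * j).factorial * pochhammerRatio (d : ℝ)⁻¹ j) := by
        rw [mul_sum]
        refine sum_congr rfl fun j hj => ?_
        have hfac := Nat.factorial_mul_descFactorial (Nat.sub_le N (d * j))
        rw [Nat.sub_sub_self
          (mul_le_of_mul_succ_eq_succ hd hN (mem_range_succ_iff.1 hj))] at hfac
        rw [← hfac]
        push_cast
        ring
    _ ≤ ∑ j ∈ range (m + 1), (N.descFactorial (N - d * j) : ℝ) * fd d (d * j) := by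
        gcongr with j hj
        exact ih j (mem_range.1 hj)
    _ ≤ fd d (N + 1) := by exact_mod_cast sum_descFactorial_mul_fd_mul_le hd hN

theorem half_mul_natCast_mul_rpow_le {d : ℕ} (hd : 0 < d) (m : ℕ) :
    1 / 2 * ((d * m : ℕ) : ℝ) ^ ((d : ℝ)⁻¹ - 1) ≤
      (d : ℝ)⁻¹ * (m : ℝ) ^ ((d : ℝ)⁻¹ - 1) := by
  have hd' : (0 : ℝ) < d := by exact_mod_cast hd
  rw [Nat.cast_mul, Real.mul_rpow hd'.le m.cast_nonneg, Real.rpow_sub_one hd'.ne']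
  calc 1 / 2 * ((d : ℝ) ^ (d : ℝ)⁻¹ / d * (m : ℝ) ^ ((d : ℝ)⁻¹ - 1))
      = (d : ℝ) ^ (d : ℝ)⁻¹ / 2 * ((d : ℝ)⁻¹ * (m : ℝ) ^ ((d : ℝ)⁻¹ - 1)) := by
        ring
    _ ≤ (d : ℝ)⁻¹ * (m : ℝ) ^ ((d : ℝ)⁻¹ - 1) :=
      mul_le_of_le_one_left (by positivity) (by linarith [natCast_rpow_inv_le_two d])

theorem stmt_3 :
    ∃ c : ℝ, 0 < c ∧ ∀ d n : ℕ, 2 ≤ d → d ∣ n → 0 < n →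
      c * (n.factorial : ℝ) * (n : ℝ) ^ (-1 + 1 / (d : ℝ) : ℝ) ≤ (fd d n : ℝ) := by
  refine ⟨1 / 2, by norm_num, ?_⟩
  rintro d _ hd ⟨m, rfl⟩ hn
  have hd0 : 0 < d := by omega
  have hm : 1 ≤ m := Nat.pos_of_mul_pos_left hn
  rw [show (-1 + 1 / (d : ℝ)) = (d : ℝ)⁻¹ - 1 by ring]
  calc 1 / 2 * ((d * m).factorial : ℝ) * ((d * m : ℕ) : ℝ) ^ ((d : ℝ)⁻¹ - 1)
      = (d * m).factorial * (1 / 2 * ((d * m : ℕ) : ℝ) ^ ((d : ℝ)⁻¹ - 1)) := by ring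
    _ ≤ (d * m).factorial * ((d : ℝ)⁻¹ * (m : ℝ) ^ ((d : ℝ)⁻¹ - 1)) :=
      mul_le_mul_of_nonneg_left (half_mul_natCast_mul_rpow_le hd0 m) (by positivity)
    _ ≤ (d * m).factorial * pochhammerRatio (d : ℝ)⁻¹ m :=
      mul_le_mul_of_nonneg_left (mul_rpow_le_pochhammerRatio (by positivity)
        (inv_le_one_of_one_le₀ (by exact_mod_cast hd0)) hm) (by positivity)
    _ ≤ fd d (d * m) := factorial_mul_pochhammerRatio_le_fd hd0 m
end

section
/- Let X_1,…,X_k be independent Poisson random variables with E X_j = 1/j and let L_m(c) be as defined via column-sum-constrained nonnegative integer matrices. For distinct j_1,…,j_h ≤ k and positive integers a_1,…,a_h: E[|L_m(X)|·X_{j_1}^{a_1}⋯X_{j_h}^{a_h}] ≤ (e^{m(2^{a_1}+⋯+2^{a_h})}/(j_1⋯j_h)) · E|L_m(X)|. -/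
/-- `Lset m k c` is the set of `m`-tuples `(∑ j, j * x i j)_i` (with `j` ranging over
`1, …, k`) as `x` ranges over `m × k` matrices of nonnegative integers whose `j`-th
column sums to `c j`. -/
def Lset (m k : ℕ) (c : Fin k → ℕ) : Set (Fin m → ℕ) :=
  {v | ∃ x : Fin m → Fin k → ℕ,
        (∀ j, ∑ i, x i j = c j) ∧ ∀ i, v i = ∑ j, (j.val + 1) * x i j}

/-- The Poisson probability mass function with mean `μ`. -/
noncomputable def poissonP (μ : ℝ) (r : ℕ) : ℝ :=
  Real.exp (-μ) * μ ^ r / r.factorial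

/-- The expectation of `f (X 1, …, X k)` where `X 1, …, X k` are independent
Poisson random variables with `E (X j) = 1 / j`.  (The variable indexed by
`j : Fin k` is Poisson with mean `1 / (j + 1)`.) -/
noncomputable def pexp (k : ℕ) (f : (Fin k → ℕ) → ℝ) : ℝ :=
  ∑' c : Fin k → ℕ, (∏ j : Fin k, poissonP (1 / ((j : ℕ) + 1 : ℝ)) (c j)) * f c

/-!
Write `X` for the vector of independent Poisson variables with means `μ`, `(n)_r` for the falling
factorial and `e_j` for the `j`-th unit vector. Shifting the summation index gives
`E[(X_j)_r F(X)] = μ_j^r E[F(X + r e_j)]`. Removing one part `j` from some row of a matrix shows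
`|L_m(c + e_j)| ≤ m |L_m(c)|`, so the mixed factorial moments satisfy
`E[|L_m(X)| ∏ (X_{j_i})_{r_i}] ≤ ∏ (μ_{j_i} m)^{r_i} E|L_m(X)|`. Expanding
`n^a = ∑_r S(a, r) (n)_r` in Stirling numbers of the second kind, the bounds
`r! S(a, r) ≤ r^a ≤ 2^{ar}`, `μ^r ≤ μ` for `r ≥ 1` and `S(a, 0) = 0` for `a ≥ 1` give
`∑_r S(a, r) (μ m)^r ≤ μ e^{m 2^a}`.
-/

open Finset
open scoped ENNReal

lemma poissonP_nonneg {μ : ℝ} (hμ : 0 ≤ μ) (n : ℕ) : 0 ≤ poissonP μ n := by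
  unfold poissonP; positivity

lemma poissonP_add_mul_descFactorial (μ : ℝ) (n r : ℕ) :
    poissonP μ (n + r) * (n + r).descFactorial r = μ ^ r * poissonP μ n := by
  unfold poissonP
  rw [← Nat.factorial_mul_descFactorial (Nat.le_add_left r n), Nat.add_sub_cancel]
  push_cast
  have hn := n.factorial_pos
  have hd : 0 < (n + r).descFactorial r := Nat.descFactorial_pos.2 (by omega)
  field_simp
  ring

lemma poissonP_mul_pow (μ M : ℝ) (n : ℕ) :
    poissonP μ n * M ^ n = Real.exp (-μ) * ((μ * M) ^ n / n.factorial) := by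
  unfold poissonP; ring

namespace Nat

lemma mul_descFactorial (n r : ℕ) :
    n * n.descFactorial r = n.descFactorial (r + 1) + r * n.descFactorial r := by
  rcases lt_or_ge n r with hlt | hle
  · simp [descFactorial_eq_zero_iff_lt.2 hlt]
  · rw [descFactorial_succ, ← add_mul, Nat.sub_add_cancel hle]

lemma pow_eq_sum_stirlingSecond_mul_descFactorial (n a : ℕ) :
    n ^ a = ∑ r ∈ range (a + 1), stirlingSecond a r * n.descFactorial r := by
  induction a with
  | zero => simp
  | succ a ih =>
    have shift : ∑ r ∈ range (a + 1), r * stirlingSecond a r * n.descFactorial r =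
        ∑ r ∈ range (a + 1), (r + 1) * stirlingSecond a (r + 1) * n.descFactorial (r + 1) := by
      rw [sum_range_succ', sum_range_succ, stirlingSecond_eq_zero_of_lt a.lt_succ_self]
      simp
    rw [pow_succ, ih, sum_mul, sum_range_succ' _ (a + 1)]
    simp only [stirlingSecond_succ_succ, stirlingSecond_succ_zero, zero_mul, add_zero]
    calc ∑ r ∈ range (a + 1), stirlingSecond a r * n.descFactorial r * n
        = ∑ r ∈ range (a + 1), stirlingSecond a r * n.descFactorial (r + 1)
          + ∑ r ∈ range (a + 1), r * stirlingSecond a r * n.descFactorial r := by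
          rw [← sum_add_distrib]
          refine sum_congr rfl fun r _ => ?_
          rw [mul_assoc, mul_comm _ n, mul_descFactorial]
          ring
      _ = _ := by rw [shift, ← sum_add_distrib]; refine sum_congr rfl fun r _ => ?_; ring

lemma factorial_mul_stirlingSecond_le_pow (a r : ℕ) : r.factorial * stirlingSecond a r ≤ r ^ a := by
  rcases lt_or_ge a r with hlt | hle
  · simp [stirlingSecond_eq_zero_of_lt hlt]
  rw [pow_eq_sum_stirlingSecond_mul_descFactorial, ← descFactorial_self, mul_comm]
  exact single_le_sum (f := fun s => stirlingSecond a s * r.descFactorial s)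
    (fun _ _ => Nat.zero_le _) (mem_range.2 (Nat.lt_succ_of_le hle))

end Nat

lemma sum_stirlingSecond_mul_pow_le {μ M : ℝ} (hμ₀ : 0 ≤ μ) (hμ₁ : μ ≤ 1) (hM : 0 ≤ M)
    {a : ℕ} (ha : 1 ≤ a) :
    ∑ r ∈ range (a + 1), (Nat.stirlingSecond a r : ℝ) * (μ * M) ^ r ≤ μ * Real.exp (M * 2 ^ a) := by
  have term : ∀ r ∈ range (a + 1),
      (Nat.stirlingSecond a r : ℝ) * (μ * M) ^ r ≤ μ * ((2 ^ a * M) ^ r / r.factorial) := by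
    intro r _
    rcases r.eq_zero_or_pos with rfl | hr
    · obtain ⟨b, rfl⟩ := Nat.exists_eq_add_of_le' ha
      simpa using hμ₀
    have hS : (r.factorial : ℝ) * Nat.stirlingSecond a r ≤ (2 ^ a) ^ r := by
      have : r ^ a ≤ (2 ^ a) ^ r := by
        rw [← pow_mul, mul_comm, pow_mul]
        exact Nat.pow_le_pow_left r.lt_two_pow_self.le a
      exact_mod_cast (Nat.factorial_mul_stirlingSecond_le_pow a r).trans this
    have hμr : μ ^ r ≤ μ := pow_le_of_le_one hμ₀ hμ₁ hr.ne'
    rw [mul_pow, mul_pow, ← mul_div_assoc, le_div_iff₀ (by positivity)]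
    calc (Nat.stirlingSecond a r : ℝ) * (μ ^ r * M ^ r) * r.factorial
        = (r.factorial * Nat.stirlingSecond a r) * (μ ^ r * M ^ r) := by ring
      _ ≤ (2 ^ a) ^ r * (μ * M ^ r) := by gcongr
      _ = μ * ((2 ^ a) ^ r * M ^ r) := by ring
  calc _ ≤ ∑ r ∈ range (a + 1), μ * ((2 ^ a * M) ^ r / r.factorial) := sum_le_sum term
    _ ≤ μ * Real.exp (2 ^ a * M) := by
      rw [← mul_sum]
      exact mul_le_mul_of_nonneg_left (Real.sum_le_exp_of_nonneg (by positivity) _) hμ₀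
    _ = μ * Real.exp (M * 2 ^ a) := by rw [mul_comm M]

lemma ENNReal.tsum_pi_prod_le {ι κ : Type*} [Fintype ι] (g : ι → κ → ℝ≥0∞) :
    ∑' c : ι → κ, ∏ i, g i (c i) ≤ ∏ i, ∑' n, g i n := by
  classical
  rw [ENNReal.tsum_eq_iSup_sum]
  refine iSup_le fun S => ?_
  calc ∑ c ∈ S, ∏ i, g i (c i)
      ≤ ∑ c ∈ Fintype.piFinset fun i => S.image (· i), ∏ i, g i (c i) :=
        sum_le_sum_of_subset fun c hc => Fintype.mem_piFinset.2 fun i => mem_image_of_mem _ hc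
    _ = ∏ i, ∑ n ∈ S.image (· i), g i n := (prod_univ_sum _ _).symm
    _ ≤ ∏ i, ∑' n, g i n := prod_le_prod' fun i _ => ENNReal.sum_le_tsum _

section Growth

variable {ι R : Type*} [DecidableEq ι] [CommMonoid R] [Preorder R] [MulLeftMono R]
  {F : (ι → ℕ) → R} {M : R}

lemma le_pow_mul_of_add_single_one_le (hF : ∀ c i, F (c + Pi.single i 1) ≤ M * F c)
    (c : ι → ℕ) (i : ι) (r : ℕ) : F (c + Pi.single i r) ≤ M ^ r * F c := by
  induction r with
  | zero => simp
  | succ r ih =>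
    calc F (c + Pi.single i (r + 1)) = F ((c + Pi.single i r) + Pi.single i 1) := by
          rw [Pi.single_add, add_assoc]
      _ ≤ M * F (c + Pi.single i r) := hF _ _
      _ ≤ M * (M ^ r * F c) := mul_le_mul_right ih M
      _ = M ^ (r + 1) * F c := by rw [pow_succ', mul_assoc]

lemma le_pow_sum_mul_of_add_single_one_le [Fintype ι]
    (hF : ∀ c i, F (c + Pi.single i 1) ≤ M * F c) (c : ι → ℕ) :
    F c ≤ M ^ (∑ i, c i) * F 0 := by
  suffices ∀ s : Finset ι, F (∑ i ∈ s, Pi.single i (c i)) ≤ M ^ (∑ i ∈ s, c i) * F 0 by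
    simpa only [univ_sum_single] using this univ
  intro s
  induction s using Finset.induction with
  | empty => simp
  | insert i s hi ih =>
    rw [sum_insert hi, sum_insert hi, add_comm (Pi.single i (c i) : ι → ℕ), pow_add, mul_assoc]
    exact (le_pow_mul_of_add_single_one_le hF _ i _).trans (mul_le_mul_right ih _)

end Growth

lemma tsum_ofReal_poissonP_mul_pow_lt_top {μ M : ℝ} (hμ : 0 ≤ μ) (hM : 0 ≤ M) :
    ∑' n, ENNReal.ofReal (poissonP μ n) * ENNReal.ofReal M ^ n < ⊤ := by
  have term : ∀ n : ℕ, ENNReal.ofReal (poissonP μ n) * ENNReal.ofReal M ^ n =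
      ENNReal.ofReal (Real.exp (-μ) * ((μ * M) ^ n / n.factorial)) := fun n => by
    rw [← ENNReal.ofReal_pow hM, ← ENNReal.ofReal_mul (poissonP_nonneg hμ n), poissonP_mul_pow]
  rw [tsum_congr term, ← ENNReal.ofReal_tsum_of_nonneg (fun n => by positivity)
    ((Real.summable_pow_div_factorial _).mul_left _)]
  exact ENNReal.ofReal_lt_top

section PoissonExpect

variable {ι : Type*} [Fintype ι] (μ : ι → ℝ)

noncomputable def poissonMass (c : ι → ℕ) : ℝ≥0∞ :=
  ∏ i, ENNReal.ofReal (poissonP (μ i) (c i))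

-- Expectations are taken in `ℝ≥0∞`, free of summability conditions; `pexp` is recovered with
-- `toReal` once `E|L_m(X)| < ⊤` is known (from `|L_m(c)| ≤ m^{∑ c}`).
noncomputable def poissonExpect (F : (ι → ℕ) → ℝ≥0∞) : ℝ≥0∞ :=
  ∑' c, poissonMass μ c * F c

variable {μ}

lemma poissonExpect_mono {F G : (ι → ℕ) → ℝ≥0∞} (h : ∀ c, F c ≤ G c) :
    poissonExpect μ F ≤ poissonExpect μ G :=
  ENNReal.tsum_le_tsum fun c => mul_le_mul_right (h c) _

lemma poissonExpect_const_mul (a : ℝ≥0∞) (F : (ι → ℕ) → ℝ≥0∞) :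
    poissonExpect μ (fun c => a * F c) = a * poissonExpect μ F := by
  simp_rw [poissonExpect, mul_left_comm _ a]
  exact ENNReal.tsum_mul_left

lemma poissonExpect_sum {κ : Type*} (S : Finset κ) (G : κ → (ι → ℕ) → ℝ≥0∞) :
    poissonExpect μ (fun c => ∑ x ∈ S, G x c) = ∑ x ∈ S, poissonExpect μ (G x) := by
  simp_rw [poissonExpect, mul_sum]
  exact Summable.tsum_finsetSum fun _ _ => ENNReal.summable

variable [DecidableEq ι]

lemma poissonExpect_lt_top (hμ : ∀ i, 0 ≤ μ i) {M : ℝ} (hM : 0 ≤ M) {F : (ι → ℕ) → ℝ≥0∞}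
    (hF : ∀ c i, F (c + Pi.single i 1) ≤ ENNReal.ofReal M * F c) (hF₀ : F 0 ≠ ⊤) :
    poissonExpect μ F < ⊤ := by
  calc poissonExpect μ F
      ≤ poissonExpect μ (fun c => F 0 * ∏ i, ENNReal.ofReal M ^ c i) :=
        poissonExpect_mono fun c => by
          rw [prod_pow_eq_pow_sum, mul_comm]
          exact le_pow_sum_mul_of_add_single_one_le hF c
    _ = F 0 * ∑' c : ι → ℕ, ∏ i, ENNReal.ofReal (poissonP (μ i) (c i)) * ENNReal.ofReal M ^ c i := by
        simp_rw [poissonExpect_const_mul, poissonExpect, poissonMass, prod_mul_distrib]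
    _ ≤ F 0 * ∏ i, ∑' n, ENNReal.ofReal (poissonP (μ i) n) * ENNReal.ofReal M ^ n := by
        gcongr
        exact ENNReal.tsum_pi_prod_le _
    _ < ⊤ := ENNReal.mul_lt_top hF₀.lt_top <|
        ENNReal.prod_lt_top fun i _ => tsum_ofReal_poissonP_mul_pow_lt_top (hμ i) hM

lemma poissonMass_add_single_mul_descFactorial (hμ : ∀ i, 0 ≤ μ i) (c : ι → ℕ) (i : ι) (r : ℕ) :
    poissonMass μ (c + Pi.single i r) * ((c i + r).descFactorial r : ℝ≥0∞) =
      ENNReal.ofReal (μ i ^ r) * poissonMass μ c := by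
  have off_i : ∏ t ∈ {i}ᶜ, ENNReal.ofReal (poissonP (μ t) ((c + Pi.single i r : ι → ℕ) t)) =
      ∏ t ∈ {i}ᶜ, ENNReal.ofReal (poissonP (μ t) (c t)) :=
    prod_congr rfl fun t ht => by
      rw [Pi.add_apply, Pi.single_eq_of_ne (by simpa using ht), add_zero]
  rw [poissonMass, poissonMass, Fintype.prod_eq_mul_prod_compl i, off_i,
    Fintype.prod_eq_mul_prod_compl i, Pi.add_apply, Pi.single_eq_same, mul_right_comm,
    ← ENNReal.ofReal_natCast, ← ENNReal.ofReal_mul (poissonP_nonneg (hμ i) _),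
    poissonP_add_mul_descFactorial, ENNReal.ofReal_mul (pow_nonneg (hμ i) r), mul_assoc]

lemma poissonExpect_descFactorial_mul (hμ : ∀ i, 0 ≤ μ i) (i : ι) (r : ℕ)
    (F : (ι → ℕ) → ℝ≥0∞) :
    poissonExpect μ (fun c => ((c i).descFactorial r : ℝ≥0∞) * F c) =
      ENNReal.ofReal (μ i ^ r) * poissonExpect μ (fun c => F (c + Pi.single i r)) := by
  set g : (ι → ℕ) → ℝ≥0∞ := fun c => poissonMass μ c * (((c i).descFactorial r : ℝ≥0∞) * F c)
  have hsupp : Function.support g ⊆ Set.range fun c : ι → ℕ => c + Pi.single i r := by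
    intro c hc
    have hr : r ≤ c i := by
      by_contra hlt
      simp [g, Nat.descFactorial_eq_zero_iff_lt.2 (not_le.1 hlt)] at hc
    refine ⟨c - Pi.single i r, funext fun t => ?_⟩
    rcases eq_or_ne t i with rfl | ht
    · simp [hr]
    · simp [ht]
  rw [poissonExpect, ← (add_left_injective _).tsum_eq hsupp, ← poissonExpect_const_mul]
  refine tsum_congr fun c => ?_
  simp only [g, Pi.add_apply, Pi.single_eq_same, ← mul_assoc,
    poissonMass_add_single_mul_descFactorial hμ]
  ring

lemma poissonExpect_prod_descFactorial_mul_le (hμ : ∀ i, 0 ≤ μ i) {M : ℝ} (hM : 0 ≤ M)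
    {F : (ι → ℕ) → ℝ≥0∞} (hF : ∀ c i, F (c + Pi.single i 1) ≤ ENNReal.ofReal M * F c)
    {κ : Type*} {j : κ → ι} (hj : Function.Injective j) (r : κ → ℕ) (s : Finset κ) :
    poissonExpect μ (fun c => (∏ t ∈ s, ((c (j t)).descFactorial (r t) : ℝ≥0∞)) * F c) ≤
      ENNReal.ofReal (∏ t ∈ s, (μ (j t) * M) ^ r t) * poissonExpect μ F := by
  classical
  induction s using Finset.induction with
  | empty => simp [poissonExpect]
  | insert t₀ s ht₀ ih =>
    set D : (ι → ℕ) → ℝ≥0∞ := fun c => ∏ t ∈ s, ((c (j t)).descFactorial (r t) : ℝ≥0∞)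
    have shifted : ∀ c, D (c + Pi.single (j t₀) (r t₀)) * F (c + Pi.single (j t₀) (r t₀)) ≤
        ENNReal.ofReal (M ^ r t₀) * (D c * F c) := by
      intro c
      have hD : D (c + Pi.single (j t₀) (r t₀)) = D c := prod_congr rfl fun t ht => by
        rw [Pi.add_apply, Pi.single_eq_of_ne (hj.ne (ne_of_mem_of_not_mem ht ht₀)), add_zero]
      rw [hD, mul_left_comm, ENNReal.ofReal_pow hM]
      exact mul_le_mul_right (le_pow_mul_of_add_single_one_le hF c _ _) _
    have hμM : ∀ t, 0 ≤ (μ (j t) * M) ^ r t := fun t => pow_nonneg (mul_nonneg (hμ _) hM) _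
    simp_rw [prod_insert ht₀, mul_assoc]
    rw [poissonExpect_descFactorial_mul hμ]
    calc ENNReal.ofReal (μ (j t₀) ^ r t₀) *
          poissonExpect μ (fun c => D (c + Pi.single (j t₀) (r t₀)) * F (c + Pi.single (j t₀) (r t₀)))
        ≤ ENNReal.ofReal (μ (j t₀) ^ r t₀) *
          (ENNReal.ofReal (M ^ r t₀) * poissonExpect μ (fun c => D c * F c)) := by
          rw [← poissonExpect_const_mul (ENNReal.ofReal (M ^ r t₀))]
          exact mul_le_mul_right (poissonExpect_mono shifted) _
      _ ≤ ENNReal.ofReal (μ (j t₀) ^ r t₀) *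
          (ENNReal.ofReal (M ^ r t₀) *
            (ENNReal.ofReal (∏ t ∈ s, (μ (j t) * M) ^ r t) * poissonExpect μ F)) := by
          gcongr
      _ = _ := by
          rw [ENNReal.ofReal_mul (hμM t₀), mul_pow, ENNReal.ofReal_mul (pow_nonneg (hμ _) _)]
          ring

lemma poissonExpect_prod_pow_mul_le (hμ₀ : ∀ i, 0 ≤ μ i) (hμ₁ : ∀ i, μ i ≤ 1) {M : ℝ}
    (hM : 0 ≤ M) {F : (ι → ℕ) → ℝ≥0∞}
    (hF : ∀ c i, F (c + Pi.single i 1) ≤ ENNReal.ofReal M * F c)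
    {κ : Type*} [Fintype κ] {j : κ → ι} (hj : Function.Injective j) {a : κ → ℕ}
    (ha : ∀ t, 1 ≤ a t) :
    poissonExpect μ (fun c => (∏ t, (c (j t) : ℝ≥0∞) ^ a t) * F c) ≤
      ENNReal.ofReal (∏ t, μ (j t) * Real.exp (M * 2 ^ a t)) * poissonExpect μ F := by
  classical
  set P := Fintype.piFinset fun t => range (a t + 1)
  set S : (κ → ℕ) → ℝ := fun ρ => ∏ t, (Nat.stirlingSecond (a t) (ρ t) : ℝ)
  have hS : ∀ ρ, 0 ≤ S ρ := fun ρ => prod_nonneg fun _ _ => Nat.cast_nonneg _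
  have expand : ∀ c : ι → ℕ, ∏ t, (c (j t) : ℝ≥0∞) ^ a t =
      ∑ ρ ∈ P, ENNReal.ofReal (S ρ) * ∏ t, ((c (j t)).descFactorial (ρ t) : ℝ≥0∞) := by
    intro c
    have h := congrArg (Nat.cast : ℕ → ℝ≥0∞) <| (prod_congr rfl fun t _ =>
      Nat.pow_eq_sum_stirlingSecond_mul_descFactorial (c (j t)) (a t)).trans
      (prod_univ_sum (fun t => range (a t + 1))
        fun t r => Nat.stirlingSecond (a t) r * (c (j t)).descFactorial r)
    push_cast at h
    rw [h]
    refine sum_congr rfl fun ρ _ => ?_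
    rw [prod_mul_distrib, ENNReal.ofReal_prod_of_nonneg fun _ _ => Nat.cast_nonneg _]
    simp only [ENNReal.ofReal_natCast]
  have hμM : ∀ t r, 0 ≤ (μ (j t) * M) ^ r := fun t r => pow_nonneg (mul_nonneg (hμ₀ _) hM) r
  calc poissonExpect μ (fun c => (∏ t, (c (j t) : ℝ≥0∞) ^ a t) * F c)
      = ∑ ρ ∈ P, ENNReal.ofReal (S ρ) *
          poissonExpect μ (fun c => (∏ t, ((c (j t)).descFactorial (ρ t) : ℝ≥0∞)) * F c) := by
        simp_rw [expand, sum_mul, mul_assoc, poissonExpect_sum, poissonExpect_const_mul]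
    _ ≤ ∑ ρ ∈ P, ENNReal.ofReal (S ρ) *
          (ENNReal.ofReal (∏ t, (μ (j t) * M) ^ ρ t) * poissonExpect μ F) := by
        gcongr with ρ
        exact poissonExpect_prod_descFactorial_mul_le hμ₀ hM hF hj ρ univ
    _ = ENNReal.ofReal (∏ t, ∑ r ∈ range (a t + 1),
          (Nat.stirlingSecond (a t) r : ℝ) * (μ (j t) * M) ^ r) * poissonExpect μ F := by
        rw [prod_univ_sum, ENNReal.ofReal_sum_of_nonneg fun ρ _ => prod_nonneg fun t _ =>
          mul_nonneg (Nat.cast_nonneg _) (hμM t _), sum_mul]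
        refine sum_congr rfl fun ρ _ => ?_
        rw [← mul_assoc, ← ENNReal.ofReal_mul (hS ρ), prod_mul_distrib]
    _ ≤ ENNReal.ofReal (∏ t, μ (j t) * Real.exp (M * 2 ^ a t)) * poissonExpect μ F := by
        gcongr ENNReal.ofReal ?_ * _
        exact prod_le_prod (fun t _ => sum_nonneg fun r _ =>
          mul_nonneg (Nat.cast_nonneg _) (hμM t r)) fun t _ =>
            sum_stirlingSecond_mul_pow_le (hμ₀ _) (hμ₁ _) hM (ha t)

end PoissonExpect

section Lset

variable (m k : ℕ)

lemma Lset_finite (c : Fin k → ℕ) : (Lset m k c).Finite := by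
  refine (Set.finite_Iic fun _ => ∑ t : Fin k, (t.val + 1) * c t).subset ?_
  rintro v ⟨x, hcol, hrow⟩ i
  rw [hrow i]
  exact sum_le_sum fun t _ => Nat.mul_le_mul_left _ <|
    hcol t ▸ single_le_sum (f := fun i => x i t) (fun _ _ => Nat.zero_le _) (mem_univ i)

lemma Lset_add_single_subset (c : Fin k → ℕ) (j : Fin k) :
    Lset m k (c + Pi.single j 1) ⊆
      (fun p : Fin m × (Fin m → ℕ) => p.2 + Pi.single p.1 (j.val + 1)) ''
        (Set.univ ×ˢ Lset m k c) := by
  rintro v ⟨x, hcol, hrow⟩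
  obtain ⟨i₀, -, hi₀⟩ : ∃ i ∈ univ, x i j ≠ 0 :=
    exists_ne_zero_of_sum_ne_zero (by simp [hcol j])
  set E : Fin m → Fin k → ℕ := Pi.single i₀ (Pi.single j 1)
  have hE : E ≤ x := fun i t => by
    rcases eq_or_ne i i₀ with rfl | hi
    · rcases eq_or_ne t j with rfl | ht
      · simpa [E] using Nat.one_le_iff_ne_zero.2 hi₀
      · simp [E, ht]
    · simp [E, hi]
  have colE : ∀ t, ∑ i, E i t = (Pi.single j 1 : Fin k → ℕ) t := fun t => by
    rw [sum_eq_single i₀ (fun i _ hi => by simp [E, hi]) (by simp)]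
    simp [E]
  have rowE : ∀ i, ∑ t, (t.val + 1) * E i t = (Pi.single i₀ (j.val + 1) : Fin m → ℕ) i := fun i => by
    rcases eq_or_ne i i₀ with rfl | hi
    · simp [E, Pi.single_apply]
    · simp [E, hi]
  rw [← tsub_add_cancel_of_le hE] at hcol hrow
  refine ⟨(i₀, fun i => ∑ t, (t.val + 1) * (x - E) i t),
    ⟨trivial, x - E, fun t => ?_, fun i => rfl⟩, funext fun i => ?_⟩
  · have := hcol t
    simp only [Pi.add_apply, sum_add_distrib, colE] at this
    exact add_right_cancel this
  · simp only [hrow i, Pi.add_apply, mul_add, sum_add_distrib, rowE]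

lemma card_Lset_add_single_le (c : Fin k → ℕ) (j : Fin k) :
    Nat.card (Lset m k (c + Pi.single j 1)) ≤ m * Nat.card (Lset m k c) := by
  have hfin : (Set.univ ×ˢ Lset m k c).Finite :=
    (Set.finite_univ (α := Fin m)).prod (Lset_finite m k c)
  rw [Nat.card_coe_set_eq, Nat.card_coe_set_eq]
  calc (Lset m k (c + Pi.single j 1)).ncard
      ≤ ((fun p : Fin m × (Fin m → ℕ) => p.2 + Pi.single p.1 (j.val + 1)) ''
          (Set.univ ×ˢ Lset m k c)).ncard :=
        Set.ncard_le_ncard (Lset_add_single_subset m k c j) (hfin.image _)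
    _ ≤ (Set.univ ×ˢ Lset m k c).ncard := Set.ncard_image_le hfin
    _ = m * (Lset m k c).ncard := by rw [Set.ncard_prod, Set.ncard_univ, Nat.card_fin]

lemma natCast_card_Lset_add_single_le (c : Fin k → ℕ) (j : Fin k) :
    (Nat.card (Lset m k (c + Pi.single j 1)) : ℝ≥0∞) ≤
      ENNReal.ofReal m * Nat.card (Lset m k c) := by
  rw [ENNReal.ofReal_natCast]
  exact_mod_cast card_Lset_add_single_le m k c j

end Lset

lemma pexp_natCast (k : ℕ) (g : (Fin k → ℕ) → ℕ) :
    pexp k (fun c => (g c : ℝ)) =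
      (poissonExpect (fun t : Fin k => 1 / ((t : ℕ) + 1 : ℝ)) (fun c => (g c : ℝ≥0∞))).toReal := by
  simp only [poissonExpect, poissonMass]
  rw [ENNReal.tsum_toReal_eq fun c => ENNReal.mul_ne_top
    (ENNReal.prod_ne_top fun _ _ => ENNReal.ofReal_ne_top) (ENNReal.natCast_ne_top _)]
  refine tsum_congr fun c => ?_
  rw [ENNReal.toReal_mul, ENNReal.toReal_prod, ENNReal.toReal_natCast]
  congr 1
  exact prod_congr rfl fun t _ => (ENNReal.toReal_ofReal (poissonP_nonneg (by positivity) _)).symm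

theorem stmt_10_general (m k h : ℕ) (j : Fin h → Fin k) (hj : Function.Injective j)
    (a : Fin h → ℕ) (ha : ∀ i, 1 ≤ a i) :
    pexp k (fun c => (Nat.card (Lset m k c) : ℝ) * ∏ i, (c (j i) : ℝ) ^ a i) ≤
      (Real.exp ((m : ℝ) * ∑ i, (2 : ℝ) ^ a i) / ∏ i, (((j i : ℕ) + 1 : ℝ))) *
        pexp k (fun c => (Nat.card (Lset m k c) : ℝ)) := by
  set μ : Fin k → ℝ := fun t => 1 / ((t : ℕ) + 1 : ℝ)
  have hμ₀ : ∀ t, 0 ≤ μ t := fun t => by positivity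
  have hμ₁ : ∀ t, μ t ≤ 1 := fun t => div_le_one_of_le₀ (by simp) (by positivity)
  have hconst : Real.exp ((m : ℝ) * ∑ i, (2 : ℝ) ^ a i) / ∏ i, (((j i : ℕ) + 1 : ℝ)) =
      ∏ i, μ (j i) * Real.exp (m * 2 ^ a i) := by
    rw [prod_mul_distrib, ← Real.exp_sum, ← mul_sum, div_eq_inv_mul, ← prod_inv_distrib]
    simp [μ]
  have hlhs : pexp k (fun c => (Nat.card (Lset m k c) : ℝ) * ∏ i, (c (j i) : ℝ) ^ a i) =
      pexp k (fun c => (((∏ i, c (j i) ^ a i) * Nat.card (Lset m k c) : ℕ) : ℝ)) := by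
    congr 1
    funext c
    push_cast
    ring
  rw [hlhs, pexp_natCast, pexp_natCast, hconst, ← ENNReal.toReal_ofReal
    (prod_nonneg fun i _ => mul_nonneg (hμ₀ _) (Real.exp_pos _).le), ← ENNReal.toReal_mul]
  push_cast
  exact ENNReal.toReal_mono (ENNReal.mul_ne_top ENNReal.ofReal_ne_top
    (poissonExpect_lt_top hμ₀ m.cast_nonneg (natCast_card_Lset_add_single_le m k) (ENNReal.natCast_ne_top _)).ne)
    (poissonExpect_prod_pow_mul_le hμ₀ hμ₁ m.cast_nonneg (natCast_card_Lset_add_single_le m k) hj ha)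

theorem stmt_10 (m k h : ℕ) (hm : 1 ≤ m) (j : Fin h → Fin k) (hj : Function.Injective j)
    (a : Fin h → ℕ) (ha : ∀ i, 1 ≤ a i) :
    pexp k (fun c => (Nat.card (Lset m k c) : ℝ) * ∏ i, (c (j i) : ℝ) ^ a i) ≤
      (Real.exp ((m : ℝ) * ∑ i, (2 : ℝ) ^ a i) / ∏ i, (((j i : ℕ) + 1 : ℝ))) *
        pexp k (fun c => (Nat.card (Lset m k c) : ℝ)) :=
  stmt_10_general m k h j hj a ha
end
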